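/- Let x_1, …, x_n and y_1, …, y_n be 2n pairwise distinct vertices of the hypercube graph Q_n forming a ladder: x_1 is the all-zero vertex, y_n is the all-one vertex, there is a fixed coordinate k such that for every i ∈ {1, …, n} the vertices x_i and y_i are adjacent and differ in coordinate k, and for every i ∈ {1, …, n−1} the pairs (x_i, x_{i+1}) and (y_i, y_{i+1}) are edges of Q_n. Then for every i ∈ {1, …, n−1} the edges (x_i, x_{i+1}) and (y_i, y_{i+1}) have the same type, and every type j ∈ {1, …, n} with j ≠ k appears as the type of exactly one pair of opposite edges (x_i, x_{i+1}) and (y_i, y_{i+1}). -/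

import Mathlib

/-!
Each rung `x i — y i` flips only coordinate `k`, so going around the square
`x i, x (i+1), y (i+1), y i` the two opposite edges flip the same coordinate. For the count,
follow the walk `x 0, …, x (n-1)`: it has `n - 1` steps, each flipping one coordinate, while its
endpoints, `0` and the neighbour of `1` across coordinate `k`, differ in all `n - 1` coordinates
`j ≠ k`. Each of these must flip at least once, so by counting each flips exactly once.
-/

/-- The hypercube graph `Q_n`: vertices are functions `Fin n → Bool`, adjacent iff they
differ in exactly one coordinate. -/
def hypercubeGraph (n : ℕ) : SimpleGraph (Fin n → Bool) where
  Adj x y := ∃! i : Fin n, x i ≠ y i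
  symm := by
    constructor
    rintro x y ⟨i, hi, hu⟩
    exact ⟨i, fun h => hi h.symm, fun j hj => hu j fun h => hj h.symm⟩
  loopless := by constructor; rintro x ⟨i, hi, -⟩; exact hi rfl

lemma Bool.ne_iff_ne_of_ne_iff_ne {a b c d : Bool} (h : a ≠ c ↔ b ≠ d) : a ≠ b ↔ c ≠ d := by
  decide +revert

lemma exists_lt_ne_succ_of_ne {α : Type*} (f : ℕ → α) {m : ℕ} (h : f 0 ≠ f m) :
    ∃ i < m, f i ≠ f (i + 1) := by
  induction m with
  | zero => exact absurd rfl h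
  | succ m ih =>
    by_cases hm : f m = f (m + 1)
    · obtain ⟨i, hi, hne⟩ := ih (hm ▸ h)
      exact ⟨i, by omega, hne⟩
    · exact ⟨m, by omega, hm⟩

lemma Function.injective_of_card_le_of_subset_image {α β : Type*} [Fintype α] [DecidableEq β]
    {d : α → β} {S : Finset β} (hS : S ⊆ Finset.univ.image d) (hcard : Fintype.card α ≤ S.card) :
    Function.Injective d := by
  have hle : (Finset.univ.image d).card ≤ (Finset.univ : Finset α).card := Finset.card_image_le
  have hge := Finset.card_le_card hS
  rw [Finset.card_univ] at hle
  rw [← Set.injOn_univ, ← Finset.coe_univ, ← Finset.card_image_iff, Finset.card_univ]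
  omega

namespace hypercubeGraph

variable {n : ℕ}

lemma ne_iff_eq_of_adj {u v : Fin n → Bool} {k : Fin n} (h : (hypercubeGraph n).Adj u v)
    (hk : u k ≠ v k) (j : Fin n) : u j ≠ v j ↔ j = k :=
  ⟨fun hj => h.unique hj hk, fun hj => hj ▸ hk⟩

lemma existsUnique_flip_of_card_le (x : ℕ → Fin n → Bool) {m : ℕ}
    (hadj : ∀ i < m, (hypercubeGraph n).Adj (x i) (x (i + 1)))
    {S : Finset (Fin n)} (hS : ∀ j ∈ S, x 0 j ≠ x m j) (hcard : m ≤ S.card)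
    {j : Fin n} (hj : j ∈ S) : ∃! i, i < m ∧ x i j ≠ x (i + 1) j := by
  choose d hd_flip hd_unique using fun i : Fin m => hadj i i.2
  have hflip_iff (i : Fin m) (c : Fin n) : x i c ≠ x (i + 1) c ↔ d i = c :=
    ⟨fun hc => (hd_unique i c hc).symm, fun hc => hc ▸ hd_flip i⟩
  have hS_image : S ⊆ Finset.univ.image d := by
    intro c hc
    obtain ⟨i, hi, hne⟩ := exists_lt_ne_succ_of_ne (fun t => x t c) (hS c hc)
    exact Finset.mem_image.mpr ⟨⟨i, hi⟩, Finset.mem_univ _, (hflip_iff ⟨i, hi⟩ c).mp hne⟩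
  have hd_inj : Function.Injective d :=
    Function.injective_of_card_le_of_subset_image hS_image (by simpa using hcard)
  obtain ⟨i, -, hi⟩ := Finset.mem_image.mp (hS_image hj)
  refine ⟨i, ⟨i.2, (hflip_iff i j).mpr hi⟩, ?_⟩
  rintro t ⟨ht, hne⟩
  exact congrArg Fin.val (hd_inj (((hflip_iff ⟨t, ht⟩ j).mp hne).trans hi.symm))

end hypercubeGraph

theorem hypercube_ladder_types_general (n : ℕ) (k : Fin n)
    (x y : ℕ → (Fin n → Bool))
    (hx0 : x 0 = fun _ => false)
    (hyn : y (n - 1) = fun _ => true)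
    (hrung : ∀ i < n, (hypercubeGraph n).Adj (x i) (y i) ∧ x i k ≠ y i k)
    (hxadj : ∀ i, i + 1 < n → (hypercubeGraph n).Adj (x i) (x (i + 1))) :
    (∀ i, i + 1 < n → ∀ j : Fin n, (x i j ≠ x (i + 1) j ↔ y i j ≠ y (i + 1) j)) ∧
    (∀ j : Fin n, j ≠ k → ∃! i : ℕ, i + 1 < n ∧ x i j ≠ x (i + 1) j) := by
  have hn : 0 < n := k.pos
  have hrung_iff (i : ℕ) (hi : i < n) (j : Fin n) : x i j ≠ y i j ↔ j = k :=
    hypercubeGraph.ne_iff_eq_of_adj (hrung i hi).1 (hrung i hi).2 j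
  refine ⟨fun i hi j => Bool.ne_iff_ne_of_ne_iff_ne
    ((hrung_iff i (by omega) j).trans (hrung_iff (i + 1) hi j).symm), fun j hj => ?_⟩
  have hxm : ∀ c ∈ Finset.univ.erase k, x 0 c ≠ x (n - 1) c := by
    intro c hc
    have hxy : x (n - 1) c = y (n - 1) c :=
      not_not.mp fun h => Finset.ne_of_mem_erase hc ((hrung_iff _ (by omega) c).mp h)
    simp [hx0, hxy, hyn]
  obtain ⟨i, ⟨hi, hflip⟩, huniq⟩ := hypercubeGraph.existsUnique_flip_of_card_le x
    (fun i hi => hxadj i (by omega)) hxm (by simp) (Finset.mem_erase.mpr ⟨hj, Finset.mem_univ j⟩)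
  exact ⟨i, ⟨by omega, hflip⟩, fun t ht => huniq t ⟨by omega, ht.2⟩⟩

/-- **Theorem.** Let `x 0, …, x (n-1)` and `y 0, …, y (n-1)` be `2n` pairwise distinct
vertices of `Q_n` forming a ladder: `x 0` is the all-zero vertex, `y (n-1)` is the all-one
vertex, for every `i < n` the vertices `x i` and `y i` are adjacent and differ in the fixed
coordinate `k`, and consecutive `x`'s resp. `y`'s are adjacent. Then opposite rung-to-rung
edges `(x i, x (i+1))` and `(y i, y (i+1))` have the same type, and every type `j ≠ k`
appears as the type of exactly one such pair of opposite edges. -/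
theorem hypercube_ladder_types (n : ℕ) (hn : 1 ≤ n) (k : Fin n)
    (x y : ℕ → (Fin n → Bool))
    (hxinj : ∀ i < n, ∀ j < n, x i = x j → i = j)
    (hyinj : ∀ i < n, ∀ j < n, y i = y j → i = j)
    (hxy : ∀ i < n, ∀ j < n, x i ≠ y j)
    (hx0 : x 0 = fun _ => false)
    (hyn : y (n - 1) = fun _ => true)
    (hrung : ∀ i < n, (hypercubeGraph n).Adj (x i) (y i) ∧ x i k ≠ y i k)
    (hxadj : ∀ i, i + 1 < n → (hypercubeGraph n).Adj (x i) (x (i + 1)))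
    (hyadj : ∀ i, i + 1 < n → (hypercubeGraph n).Adj (y i) (y (i + 1))) :
    (∀ i, i + 1 < n → ∀ j : Fin n, (x i j ≠ x (i + 1) j ↔ y i j ≠ y (i + 1) j)) ∧
    (∀ j : Fin n, j ≠ k → ∃! i : ℕ, i + 1 < n ∧ x i j ≠ x (i + 1) j) :=
  hypercube_ladder_types_general n k x y hx0 hyn hrung hxadj
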